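/- Let ε > 0 and let p, S, L be matrix-valued functions with: L : (−ε,ε) → Matₙ(ℝ) smooth, L(u) invertible for 0 < |u| < ε; S : (−ε,0)∪(0,ε) → Matₙ(ℝ) differentiable and symmetric-valued with S'(u) + S(u)² + p(u) = 0 and L'(u) = S(u)·L(u) for 0 < |u| < ε, where p : (−ε,ε) → Matₙ(ℝ) is continuous. Then S(u) = O(u⁻¹) at the singular point u = 0: there exist constants C > 0 and δ ∈ (0,ε) such that ‖S(u)‖ ≤ C/|u| for all u with 0 < |u| < δ; equivalently, u ↦ u·S(u) is bounded near 0. -/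

import Mathlib

open Matrix Set

attribute [local instance] Matrix.frobeniusNormedAddCommGroup Matrix.frobeniusNormedSpace

noncomputable def quadCLM {n : ℕ} (x : Fin n → ℝ) :
    Matrix (Fin n) (Fin n) ℝ →L[ℝ] ℝ :=
  LinearMap.toContinuousLinearMap
  { toFun := fun A => x ⬝ᵥ A *ᵥ x
    map_add' := fun A B => by simp [Matrix.add_mulVec, dotProduct_add]
    map_smul' := fun c A => by
      simp [Matrix.smul_mulVec, dotProduct_smul, smul_eq_mul] }

@[simp] lemma quadCLM_apply {n : ℕ} (x : Fin n → ℝ) (A : Matrix (Fin n) (Fin n) ℝ) :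
    quadCLM x A = x ⬝ᵥ A *ᵥ x := rfl



lemma frob_eq {n : ℕ} (A : Matrix (Fin n) (Fin n) ℝ) :
    ‖A‖ = Real.sqrt (∑ i, ∑ j, (A i j) ^ 2) := by
  rw [Matrix.frobenius_norm_def, Real.sqrt_eq_rpow]
  congr 1
  refine Finset.sum_congr rfl fun i _ => Finset.sum_congr rfl fun j _ => ?_
  rw [Real.norm_eq_abs, show (2:ℝ) = ((2:ℕ):ℝ) by norm_num, Real.rpow_natCast, sq_abs]

lemma quad_abs_le_norm {n : ℕ} (P : Matrix (Fin n) (Fin n) ℝ) (x : Fin n → ℝ)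
    (hx : ∑ i, x i ^ 2 = 1) : |x ⬝ᵥ P *ᵥ x| ≤ ‖P‖ := by
  have h1 : (x ⬝ᵥ P *ᵥ x) ^ 2 ≤ ∑ i, ∑ j, (P i j) ^ 2 := by
    have hcs : (x ⬝ᵥ P *ᵥ x) ^ 2 ≤ (∑ i, x i ^ 2) * ∑ i, (P.mulVec x i) ^ 2 :=
      Finset.sum_mul_sq_le_sq_mul_sq _ _ _
    rw [hx, one_mul] at hcs
    refine hcs.trans (Finset.sum_le_sum fun i _ => ?_)
    have hrf : (P.mulVec x i) = ∑ j, P i j * x j := rfl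
    have : (∑ j, P i j * x j) ^ 2 ≤ (∑ j, (P i j) ^ 2) * ∑ j, x j ^ 2 :=
      Finset.sum_mul_sq_le_sq_mul_sq _ _ _
    rw [hrf]
    rwa [hx, mul_one] at this
  have h2 : |x ⬝ᵥ P *ᵥ x| = Real.sqrt ((x ⬝ᵥ P *ᵥ x) ^ 2) := (Real.sqrt_sq_eq_abs _).symm
  rw [h2, frob_eq]
  exact Real.sqrt_le_sqrt h1

lemma quad_sq_le {n : ℕ} (A : Matrix (Fin n) (Fin n) ℝ) (hA : Aᵀ = A) (x : Fin n → ℝ)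
    (hx : ∑ i, x i ^ 2 = 1) : (x ⬝ᵥ A *ᵥ x) ^ 2 ≤ x ⬝ᵥ (A * A) *ᵥ x := by
  have key : x ⬝ᵥ (A * A) *ᵥ x = ∑ i, (A.mulVec x i) ^ 2 := by
    rw [← Matrix.mulVec_mulVec, Matrix.dotProduct_mulVec, ← Matrix.mulVec_transpose, hA]
    simp [dotProduct, sq]
  rw [key]
  have hcs : (x ⬝ᵥ A *ᵥ x) ^ 2 ≤ (∑ i, x i ^ 2) * ∑ i, (A.mulVec x i) ^ 2 :=
    Finset.sum_mul_sq_le_sq_mul_sq _ _ _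
  rwa [hx, one_mul] at hcs


/-- Core comparison: a scalar function with `s' ≤ -s² + M` on `(a,b)` cannot lie below the
blowing-down barrier `2/(t - t₁)` at a point `t₀ < t₁` inside the interval. -/
lemma riccati_no_blowdown {M a b t₀ t₁ : ℝ} {s : ℝ → ℝ} (hM : 0 ≤ M)
    (hd : ∀ t ∈ Ioo a b, ∃ d, HasDerivAt s d t ∧ d ≤ -(s t) ^ 2 + M)
    (hat : a < t₀) (ht : t₀ < t₁) (hb : t₁ < b)
    (hgap : (t₁ - t₀) ^ 2 * (M + 1) ≤ 2)
    (hinit : s t₀ ≤ 2 / (t₀ - t₁)) : False := by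
  have hsd : ∀ t ∈ Ioo a b, HasDerivAt s (deriv s t) t := by
    intro t htm
    obtain ⟨d, h1, _⟩ := hd t htm
    rwa [h1.deriv]
  have hsb : ∀ t ∈ Ioo a b, deriv s t ≤ -(s t) ^ 2 + M := by
    intro t htm
    obtain ⟨d, h1, h2⟩ := hd t htm
    rwa [h1.deriv]
  have hIcc : Icc t₀ t₁ ⊆ Ioo a b := fun t htm => ⟨lt_of_lt_of_le hat htm.1, lt_of_le_of_lt htm.2 hb⟩
  have hcont : ContinuousOn s (Icc t₀ t₁) := fun t htm =>
    ((hsd t (hIcc htm)).continuousAt).continuousWithinAt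
  obtain ⟨C, hC⟩ := isCompact_Icc.exists_bound_of_continuousOn hcont
  have hC0 : 0 ≤ C := le_trans (norm_nonneg _) (hC t₀ ⟨le_refl _, le_of_lt ht⟩)
  set r : ℝ := min (t₁ - t₀) (1 / (C + 1)) with hr_def
  have hr0 : 0 < r := lt_min (by linarith) (by positivity)
  have hr1 : r ≤ t₁ - t₀ := min_le_left _ _
  have hr2 : r ≤ 1 / (C + 1) := min_le_right _ _
  set c : ℝ := t₁ - r with hc_def
  have hct₀ : t₀ ≤ c := by simp only [hc_def]; linarith
  have hct₁ : c < t₁ := by simp only [hc_def]; linarith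
  -- the fence theorem on [t₀, c]
  have fence : ∀ x ∈ Icc t₀ c, s x ≤ 2 * (x - t₁)⁻¹ := by
    have hsub : Icc t₀ c ⊆ Ioo a b := fun t htm => hIcc ⟨htm.1, le_trans htm.2 (le_of_lt hct₁)⟩
    refine image_le_of_deriv_right_lt_deriv_boundary'
      (f := s) (f' := deriv s) (B := fun t => 2 * (t - t₁)⁻¹)
      (B' := fun t => 2 * (-1 / (t - t₁) ^ 2)) ?hf ?hf' ?ha ?hB ?hB' ?bound
    · exact fun t htm => ((hsd t (hsub htm)).continuousAt).continuousWithinAt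
    · exact fun x hx => ((hsd x (hsub ⟨hx.1, le_of_lt hx.2⟩)).hasDerivWithinAt)
    · rw [div_eq_mul_inv] at hinit; exact hinit
    · refine ContinuousOn.mul continuousOn_const (ContinuousOn.inv₀ (by fun_prop) ?_)
      intro x hx
      have : x < t₁ := lt_of_le_of_lt hx.2 hct₁
      intro h; rw [sub_eq_zero] at h; exact absurd h (ne_of_lt this)
    · intro x hx
      have hxne : x - t₁ ≠ 0 := by
        have : x < t₁ := lt_of_lt_of_le hx.2 (le_of_lt hct₁)
        intro h; rw [sub_eq_zero] at h; exact absurd h (ne_of_lt this)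
      exact ((((hasDerivAt_id x).sub_const t₁).inv hxne).const_mul 2).hasDerivWithinAt
    · intro x hx hsx
      have hx' : x ∈ Ioo a b := hsub ⟨hx.1, le_of_lt hx.2⟩
      have hxlt : x < t₁ := lt_of_lt_of_le hx.2 (le_of_lt hct₁)
      have hxne : x - t₁ ≠ 0 := by intro h; rw [sub_eq_zero] at h; exact absurd h (ne_of_lt hxlt)
      have hq : 0 < (x - t₁) ^ 2 := by positivity
      have hq2 : (x - t₁) ^ 2 ≤ (t₁ - t₀) ^ 2 := by nlinarith [hx.1, ht.le]
      have hMq : M * (x - t₁) ^ 2 < 2 := by nlinarith [sq_nonneg (t₁ - t₀)]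
      have hder := hsb x hx'
      rw [hsx] at hder
      have hw : (x - t₁) ^ 2 * ((x - t₁) ^ 2)⁻¹ = 1 := mul_inv_cancel₀ (by positivity)
      have hsq : (2 * (x - t₁)⁻¹) ^ 2 = 4 * ((x - t₁) ^ 2)⁻¹ := by
        field_simp; norm_num
      have hwpos : 0 < ((x - t₁) ^ 2)⁻¹ := by positivity
      have key : M * (x - t₁) ^ 2 * ((x - t₁) ^ 2)⁻¹ < 2 * ((x - t₁) ^ 2)⁻¹ :=
        mul_lt_mul_of_pos_right hMq hwpos
      have hMlt : M < 2 * ((x - t₁) ^ 2)⁻¹ := by nlinarith [hw]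
      have hBeq : 2 * (-1 / (x - t₁) ^ 2) = -(2 * ((x - t₁) ^ 2)⁻¹) := by
        rw [neg_div, one_div]; ring
      calc deriv s x ≤ -(2 * (x - t₁)⁻¹) ^ 2 + M := hder
        _ < 2 * (-1 / (x - t₁) ^ 2) := by rw [hsq, hBeq]; linarith
  -- contradiction: s c is very negative but bounded by C
  have hcmem : c ∈ Icc t₀ t₁ := ⟨hct₀, le_of_lt hct₁⟩
  have h1 : s c ≤ 2 * (c - t₁)⁻¹ := fence c ⟨hct₀, le_refl c⟩
  have h2 : c - t₁ = -r := by simp [hc_def]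
  have h3 : s c ≤ -(2 / r) := by
    rw [h2] at h1
    have he : (2:ℝ) * (-r)⁻¹ = -(2 / r) := by rw [inv_neg, div_eq_mul_inv]; ring
    rw [he] at h1; exact h1
  have h4 : (2 : ℝ) / r ≥ 2 * (C + 1) := by
    rw [ge_iff_le, le_div_iff₀ hr0]
    calc 2 * (C + 1) * r ≤ 2 * (C + 1) * (1 / (C + 1)) := by
          apply mul_le_mul_of_nonneg_left hr2; positivity
      _ = 2 := by field_simp
  have h5 : ‖s c‖ ≤ C := hC c hcmem
  rw [Real.norm_eq_abs, abs_le] at h5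
  linarith [h5.1]

lemma riccati_scalar_bound {M δ : ℝ} (hM : 0 ≤ M) (hδ : 0 < δ)
    (hδ2 : δ ^ 2 * (M + 1) ≤ 2) {s : ℝ → ℝ}
    (hd : ∀ t ∈ Ioo (0:ℝ) δ, ∃ d, HasDerivAt s d t ∧ d ≤ -(s t) ^ 2 + M) :
    ∀ u : ℝ, 0 < u → u < δ / 2 → |s u| ≤ 8 / u := by
  intro u hu huδ
  have huδ' : u < δ := by linarith
  -- lower bound
  have hlow : -(8 / δ) < s u := by
    by_contra h
    push_neg at h
    refine riccati_no_blowdown (a := 0) (b := δ) (t₀ := u) (t₁ := u + δ/4) hM hd hu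
      (by linarith) (by linarith) ?_ ?_
    · have : (u + δ/4 - u) ^ 2 * (M + 1) = δ^2 * (M+1) / 16 := by ring
      rw [this]; linarith
    · have : (2:ℝ) / (u - (u + δ/4)) = -(8/δ) := by
        rw [show u - (u + δ/4) = -(δ/4) by ring, div_neg, neg_inj,
          div_div_eq_mul_div, div_eq_div_iff (by linarith) hδ.ne']
        ring
      rw [this]; linarith
  -- upper bound via reflection
  have hup : s u < 4 / u := by
    by_contra h
    push_neg at h
    have hσ : ∀ t ∈ Ioo (2*u - δ) (2*u), ∃ d,
        HasDerivAt (fun t => -s (2*u - t)) d t ∧ d ≤ -((fun t => -s (2*u - t)) t) ^ 2 + M := by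
      intro t htm
      have hv : 2*u - t ∈ Ioo (0:ℝ) δ := ⟨by linarith [htm.2], by linarith [htm.1]⟩
      obtain ⟨d, h1, h2⟩ := hd _ hv
      refine ⟨d, ?_, ?_⟩
      · have hinner : HasDerivAt (fun t : ℝ => 2*u - t) (-1) t := by
          simpa using (hasDerivAt_id' t).const_sub (2*u)
        have := (h1.comp t hinner).neg
        simp at this; exact this
      · simpa using h2
    refine riccati_no_blowdown (M := M) (a := 2*u - δ) (b := 2*u) (t₀ := u) (t₁ := u + u/2)
      hM hσ (by linarith) (by linarith) (by linarith) ?_ ?_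
    · have : (u + u/2 - u) ^ 2 * (M + 1) = u^2 * (M+1) / 4 := by ring
      rw [this]
      have h1 : u ^ 2 ≤ δ ^ 2 := by nlinarith
      nlinarith
    · show -s (2*u - u) ≤ 2 / (u - (u + u/2))
      rw [show 2*u - u = u by ring, show u - (u + u/2) = -(u/2) by ring]
      have : (2:ℝ) / (-(u/2)) = -(4/u) := by
        rw [div_neg, neg_inj, div_div_eq_mul_div, div_eq_div_iff (by linarith) hu.ne']
        ring
      rw [this]; linarith
  have h8 : -(8/u) ≤ s u := by
    have : 8 / δ ≤ 8 / u := by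
      apply div_le_div_of_nonneg_left (by norm_num) hu (le_of_lt huδ')
    linarith
  have h8' : s u ≤ 8 / u := by
    have : (4:ℝ)/u ≤ 8/u := by
      gcongr <;> norm_num
    linarith
  rw [abs_le]; exact ⟨h8, h8'⟩

/-- Let `L` be smooth on `(−ε,ε)` and invertible for `0 < |u| < ε`, and let
`S` be a symmetric solution of the Sachs equation `S' + S² + p = 0` with `L' = S L` on the
punctured interval, `p` continuous.  Then `S(u) = O(u⁻¹)` at `u = 0`: there are `C > 0` and
`δ ∈ (0,ε)` with `‖S u‖ ≤ C/|u|` for all `0 < |u| < δ`. -/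
theorem shear_blowup_rate {n : ℕ} (ε : ℝ) (hε : 0 < ε)
    (p S L : ℝ → Matrix (Fin n) (Fin n) ℝ)
    (hp : ContinuousOn p (Set.Ioo (-ε) ε))
    (hLsmooth : ContDiffOn ℝ (⊤ : ℕ∞) L (Set.Ioo (-ε) ε))
    (hLinv : ∀ u : ℝ, u ≠ 0 → |u| < ε → IsUnit (L u))
    (hSsym : ∀ u : ℝ, u ≠ 0 → |u| < ε → (S u)ᵀ = S u)
    (hSachs : ∀ u : ℝ, u ≠ 0 → |u| < ε → HasDerivAt S (-(S u * S u + p u)) u)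
    (hSL : ∀ u : ℝ, u ≠ 0 → |u| < ε → deriv L u = S u * L u) :
    ∃ C > (0 : ℝ), ∃ δ > (0 : ℝ), δ < ε ∧
      ∀ u : ℝ, u ≠ 0 → |u| < δ → ‖S u‖ ≤ C / |u| := by
  -- bound p near 0
  set δ₀ : ℝ := ε / 2 with hδ₀_def
  have hδ₀pos : 0 < δ₀ := by positivity
  have hsub : Icc (-δ₀) δ₀ ⊆ Ioo (-ε) ε := by
    intro t htm
    constructor
    · have := htm.1; simp only [hδ₀_def] at this ⊢; linarith
    · have := htm.2; simp only [hδ₀_def] at this ⊢; linarith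
  obtain ⟨M₀, hM₀⟩ := isCompact_Icc.exists_bound_of_continuousOn (hp.mono hsub)
  set M : ℝ := max M₀ 0 with hM_def
  have hM : 0 ≤ M := le_max_right _ _
  have hMp : ∀ t : ℝ, |t| ≤ δ₀ → ‖p t‖ ≤ M := by
    intro t htm
    rw [abs_le] at htm
    exact le_trans (hM₀ t ⟨htm.1, htm.2⟩) (le_max_left _ _)
  set δ : ℝ := min δ₀ (1 / (M + 1)) with hδ_def
  have hδpos : 0 < δ := lt_min hδ₀pos (by positivity)
  have hδδ₀ : δ ≤ δ₀ := min_le_left _ _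
  have hδM : δ ≤ 1 / (M + 1) := min_le_right _ _
  have hδ1 : δ ≤ 1 := le_trans hδM (by rw [div_le_one (by positivity)]; linarith)
  have hδ2 : δ ^ 2 * (M + 1) ≤ 2 := by
    have h1 : δ * (M + 1) ≤ 1 := by
      rw [← le_div_iff₀ (by positivity : (0:ℝ) < M + 1)]; exact hδM
    nlinarith
  have hδε : δ < ε := lt_of_le_of_lt hδδ₀ (by simp only [hδ₀_def]; linarith)
  -- derivative package for scalar quadratic forms
  have hds : ∀ (x : Fin n → ℝ), (∑ i, x i ^ 2 = 1) → ∀ t : ℝ, t ≠ 0 → |t| < δ →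
      ∃ d, HasDerivAt (fun t => x ⬝ᵥ (S t) *ᵥ x) d t ∧
        d ≤ -(x ⬝ᵥ (S t) *ᵥ x) ^ 2 + M := by
    intro x hx t ht0 htδ
    have htε : |t| < ε := lt_trans htδ hδε
    have hder := hSachs t ht0 htε
    have hD : HasDerivAt (fun t => x ⬝ᵥ (S t) *ᵥ x) (quadCLM x (-(S t * S t + p t))) t := by
      have := ((quadCLM x).hasFDerivAt (x := S t)).comp_hasDerivAt t hder
      exact this
    refine ⟨_, hD, ?_⟩
    have hval : quadCLM x (-(S t * S t + p t)) =
        -(x ⬝ᵥ (S t * S t) *ᵥ x) - x ⬝ᵥ (p t) *ᵥ x := by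
      rw [quadCLM_apply, Matrix.neg_mulVec, dotProduct_neg, Matrix.add_mulVec,
        dotProduct_add]
      ring
    rw [hval]
    have h1 : (x ⬝ᵥ (S t) *ᵥ x) ^ 2 ≤ x ⬝ᵥ (S t * S t) *ᵥ x :=
      quad_sq_le (S t) (hSsym t ht0 htε) x hx
    have h2 : |x ⬝ᵥ (p t) *ᵥ x| ≤ M :=
      le_trans (quad_abs_le_norm (p t) x hx) (hMp t (le_of_lt (lt_of_lt_of_le htδ hδδ₀)))
    rw [abs_le] at h2
    linarith [h2.1]
  -- scalar bound for all unit vectors, both sides of 0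
  have hQ : ∀ (x : Fin n → ℝ), (∑ i, x i ^ 2 = 1) → ∀ u : ℝ, u ≠ 0 → |u| < δ / 2 →
      |x ⬝ᵥ (S u) *ᵥ x| ≤ 8 / |u| := by
    intro x hx u hu0 huδ
    rcases lt_or_gt_of_ne hu0 with hneg | hpos
    · -- negative side: use t ↦ -(s(-t))
      have habs : |u| = -u := abs_of_neg hneg
      have hd' : ∀ t ∈ Ioo (0:ℝ) δ, ∃ d,
          HasDerivAt (fun t => -(x ⬝ᵥ (S (-t)) *ᵥ x)) d t ∧
            d ≤ -((fun t => -(x ⬝ᵥ (S (-t)) *ᵥ x)) t) ^ 2 + M := by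
        intro t htm
        have ht0 : (-t : ℝ) ≠ 0 := by intro h; exact absurd (neg_eq_zero.mp h) (ne_of_gt htm.1)
        have htδ : |(-t : ℝ)| < δ := by rw [abs_neg, abs_of_pos htm.1]; exact htm.2
        obtain ⟨d, h1, h2⟩ := hds x hx (-t) ht0 htδ
        refine ⟨d, ?_, ?_⟩
        · have := (h1.comp t (hasDerivAt_neg t)).neg
          simp at this; exact this
        · simpa using h2
      have := riccati_scalar_bound hM hδpos hδ2 hd' (-u) (by linarith)
        (by rw [habs] at huδ; linarith)
      rw [habs]
      simpa using this
    · have habs : |u| = u := abs_of_pos hpos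
      have hd' : ∀ t ∈ Ioo (0:ℝ) δ, ∃ d,
          HasDerivAt (fun t => x ⬝ᵥ (S t) *ᵥ x) d t ∧
            d ≤ -((fun t => x ⬝ᵥ (S t) *ᵥ x) t) ^ 2 + M := by
        intro t htm
        exact hds x hx t (ne_of_gt htm.1) (by rw [abs_of_pos htm.1]; exact htm.2)
      have := riccati_scalar_bound hM hδpos hδ2 hd' u hpos (by rwa [habs] at huδ)
      rwa [habs]
  -- entrywise bounds
  refine ⟨16 * n + 1, by positivity, δ / 2, by positivity, by linarith, ?_⟩
  intro u hu0 huδ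
  set A : Matrix (Fin n) (Fin n) ℝ := S u with hA_def
  have hAsym : Aᵀ = A := hSsym u hu0 (by
    have : δ / 2 < ε := by linarith
    exact lt_trans huδ this)
  have hu_abs : 0 < |u| := abs_pos.mpr hu0
  set R : ℝ := 8 / |u| with hR_def
  have hR0 : 0 < R := by positivity
  have hdiag : ∀ i, |A i i| ≤ R := by
    intro i
    have hx : ∑ k, (Pi.single i 1 : Fin n → ℝ) k ^ 2 = 1 := by
      simp [Pi.single_apply, sq]
    have hval : (Pi.single i 1 : Fin n → ℝ) ⬝ᵥ A *ᵥ (Pi.single i 1 : Fin n → ℝ) = A i i := by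
      rw [Matrix.mulVec_single_one, single_dotProduct, one_mul]
      exact congrFun (congrFun hAsym i) i ▸ rfl
    have := hQ _ hx u hu0 huδ
    rwa [hval] at this
  have hoff : ∀ i j, |A i j| ≤ 2 * R := by
    intro i j
    by_cases hij : i = j
    · subst hij; linarith [hdiag i]
    have hsymij : A j i = A i j := by
      have := congrFun (congrFun hAsym i) j
      simpa [Matrix.transpose_apply] using this
    set x : Fin n → ℝ := fun k => (Real.sqrt 2)⁻¹ * ((Pi.single i 1 : Fin n → ℝ) k +
      (Pi.single j 1 : Fin n → ℝ) k) with hx_def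
    have hs2 : (Real.sqrt 2) ^ 2 = 2 := Real.sq_sqrt (by norm_num)
    have hs2ne : Real.sqrt 2 ≠ 0 := by positivity
    have hij' : ¬ j = i := fun h => hij h.symm
    have hx : ∑ k, x k ^ 2 = 1 := by
      have hterm : ∀ k, x k ^ 2 = (2:ℝ)⁻¹ * ((if k = i then 1 else 0) +
          (if k = j then 1 else 0)) := by
        intro k
        have hxk : x k = (Real.sqrt 2)⁻¹ * ((if k = i then (1:ℝ) else 0) +
            (if k = j then 1 else 0)) := by
          simp [hx_def, Pi.single_apply]
        rw [hxk, mul_pow, inv_pow, hs2]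
        by_cases hki : k = i <;> by_cases hkj : k = j
        · exact absurd (hki.symm.trans hkj) hij
        all_goals simp [hki, hkj, hij, hij']
      rw [Finset.sum_congr rfl fun k _ => hterm k, ← Finset.mul_sum,
        Finset.sum_add_distrib]
      simp [Finset.sum_ite_eq']
      norm_num
    have hval : x ⬝ᵥ A *ᵥ x = (2:ℝ)⁻¹ * (A i i + A j j) + A i j := by
      have hxw : x = (Real.sqrt 2)⁻¹ • ((Pi.single i 1 : Fin n → ℝ) + Pi.single j 1) := by
        funext k; simp [hx_def, smul_eq_mul]
      have hw : ((Pi.single i 1 : Fin n → ℝ) + Pi.single j 1) ⬝ᵥ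
          A *ᵥ ((Pi.single i 1 : Fin n → ℝ) + Pi.single j 1)
          = A i i + A j j + 2 * A i j := by
        rw [Matrix.mulVec_add, dotProduct_add, add_dotProduct,
          add_dotProduct]
        rw [Matrix.mulVec_single_one, Matrix.mulVec_single_one]
        rw [single_dotProduct, single_dotProduct, single_dotProduct,
          single_dotProduct]
        simp only [Matrix.transpose_apply, Matrix.col_apply, one_mul]
        rw [hsymij]
        ring
      have hhalf : (Real.sqrt 2)⁻¹ * (Real.sqrt 2)⁻¹ = (2:ℝ)⁻¹ := by
        rw [← mul_inv, ← sq, hs2]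
      rw [hxw, Matrix.mulVec_smul, dotProduct_smul, smul_dotProduct, hw]
      simp only [smul_eq_mul]
      rw [← mul_assoc, hhalf]
      ring
    have hq := hQ x hx u hu0 huδ
    rw [hval] at hq
    have h1 := hdiag i
    have h2 := hdiag j
    have : |A i j| ≤ |(2:ℝ)⁻¹ * (A i i + A j j) + A i j| + (2:ℝ)⁻¹ * (|A i i| + |A j j|) := by
      have habs : |(2:ℝ)⁻¹ * (A i i + A j j)| ≤ (2:ℝ)⁻¹ * (|A i i| + |A j j|) := by
        rw [abs_mul, abs_of_pos (by norm_num : (0:ℝ) < (2:ℝ)⁻¹)]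
        exact mul_le_mul_of_nonneg_left (abs_add_le _ _) (by norm_num)
      calc |A i j| = |((2:ℝ)⁻¹ * (A i i + A j j) + A i j) - (2:ℝ)⁻¹ * (A i i + A j j)| := by
            ring_nf
        _ ≤ |(2:ℝ)⁻¹ * (A i i + A j j) + A i j| + |(2:ℝ)⁻¹ * (A i i + A j j)| := abs_sub _ _
        _ ≤ _ := by linarith
    linarith
  -- Frobenius norm bound
  have hnorm : ‖A‖ ≤ 2 * n * R := by
    rw [frob_eq]
    have hsum : ∑ i, ∑ j, (A i j) ^ 2 ≤ (2 * n * R) ^ 2 := by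
      have hterm : ∀ i j, (A i j) ^ 2 ≤ (2 * R) ^ 2 := by
        intro i j
        have := hoff i j
        nlinarith [abs_nonneg (A i j), sq_abs (A i j)]
      calc ∑ i, ∑ j, (A i j) ^ 2 ≤ ∑ _i : Fin n, ∑ _j : Fin n, (2 * R) ^ 2 :=
            Finset.sum_le_sum fun i _ => Finset.sum_le_sum fun j _ => hterm i j
        _ = n * (n * (2 * R) ^ 2) := by simp [Finset.sum_const, mul_assoc]
        _ ≤ (2 * n * R) ^ 2 := by nlinarith [hR0.le, Nat.cast_nonneg (α := ℝ) n]
    calc Real.sqrt (∑ i, ∑ j, (A i j) ^ 2) ≤ Real.sqrt ((2 * n * R) ^ 2) :=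
          Real.sqrt_le_sqrt hsum
      _ = 2 * n * R := Real.sqrt_sq (by positivity)
  calc ‖S u‖ = ‖A‖ := by rw [hA_def]
    _ ≤ 2 * n * R := hnorm
    _ = 16 * n / |u| := by rw [hR_def]; ring
    _ ≤ (16 * n + 1) / |u| := by gcongr; linarith
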